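/- (Bases are in bijection with bounded feasible chambers.) Let W ⊆ ℝ^E be a linear subspace, and let h, z ∈ ℝ^E be generic parameters: ⟨h, γ⟩ ≠ 0 for every circuit γ of W, and ⟨z, χ⟩ ≠ 0 for every cocircuit χ (circuit of Wᗮ). Call a subset b ⊆ E a base if the coordinate-restriction map Wᗮ → ℝ^b, u ↦ (u(e))_{e∈b}, is a linear isomorphism; for a base b there is a unique point v_b ∈ ℝ^E with v_b − h ∈ Wᗮ and v_b(e) = 0 for all e ∈ b (the vertex H_b of the arrangement). Then: (i) for every base b there is a unique sign vector μ(b) : E → {+1,−1} which is h-feasible and z-bounded and satisfies v_b ∈ Δ_{μ(b)}(h) and ⟨z, v⟩ ≤ ⟨z, v_b⟩ for all v ∈ Δ_{μ(b)}(h) (i.e. the chamber Δ_{μ(b)}(h) has ζ-maximum at H_b); and (ii) the assignment b ↦ μ(b) is a bijection from the set of bases onto the set of sign vectors that are both h-feasible and z-bounded. -/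

import Mathlib

/-- The standard inner product on `ℝ^E`. -/
noncomputable def dot {E : Type*} [Fintype E] (x y : E → ℝ) : ℝ := ∑ e, x e * y e

/-- The orthogonal complement of a subspace `W ⊆ ℝ^E` with respect to the
standard inner product. -/
def perp {E : Type*} [Fintype E] (W : Submodule ℝ (E → ℝ)) : Set (E → ℝ) :=
  {u | ∀ w ∈ W, dot w u = 0}

/-- The chamber `Δ_α(h) := { v : v - h ∈ Wᗮ, α e * v e ≥ 0 ∀ e }`. -/
def Chamber {E : Type*} [Fintype E] (W : Submodule ℝ (E → ℝ)) (h α : E → ℝ) :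
    Set (E → ℝ) :=
  {v | v - h ∈ perp W ∧ ∀ e, 0 ≤ α e * v e}

/-- A sign vector `α` is `h`-feasible if the chamber `Δ_α(h)` is nonempty. -/
def IsFeasible {E : Type*} [Fintype E] (W : Submodule ℝ (E → ℝ)) (h α : E → ℝ) : Prop :=
  (Chamber W h α).Nonempty

/-- The cone `C_α := { u ∈ Wᗮ : α e * u e ≥ 0 for all e }`. -/
def cone {E : Type*} [Fintype E] (W : Submodule ℝ (E → ℝ)) (α : E → ℝ) : Set (E → ℝ) :=
  {u | u ∈ perp W ∧ ∀ e, 0 ≤ α e * u e}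

/-- A sign vector `α` is `z`-bounded if `u ↦ ⟨z, u⟩` is bounded above on `C_α`. -/
def IsBoundedSV {E : Type*} [Fintype E] (W : Submodule ℝ (E → ℝ)) (z α : E → ℝ) : Prop :=
  BddAbove ((fun u => dot z u) '' cone W α)

/-- A circuit of a subset `U ⊆ ℝ^E` is a nonzero element of `U` whose support is
minimal under inclusion among supports of nonzero elements of `U`. -/
def IsCircuit {E : Type*} [Fintype E] (U : Set (E → ℝ)) (u : E → ℝ) : Prop :=
  u ∈ U ∧ u ≠ 0 ∧
    ∀ w ∈ U, w ≠ 0 → {e | w e ≠ 0} ⊆ {e | u e ≠ 0} → {e | w e ≠ 0} = {e | u e ≠ 0}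

/-- A subset `b ⊆ E` is a base if the coordinate-restriction map `Wᗮ → ℝ^b`
is a linear isomorphism (i.e. is bijective). -/
def IsBase {E : Type*} [Fintype E] (W : Submodule ℝ (E → ℝ)) (b : Set E) : Prop :=
  Function.Bijective (fun (u : perp W) (e : b) => u.1 e.1)

/-!
For a base `b`, the fundamental cocircuits `u_e` (`e ∈ b`) form a basis of `Wᗮ`, and genericity
of `z` makes every coefficient `⟨z, u_e⟩` of `⟨z, ·⟩` in this basis nonzero. Taking `μ(b)` on `b`
opposite to the signs of these coefficients makes `⟨z, ·⟩` nonpositive on the cone of `μ(b)`, and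
zero only on directions vanishing on `b`, so the chamber is `z`-bounded with strict maximum at
`H_b`; genericity of `h` puts `H_b` off the hyperplanes of `E \ b`, which fixes `μ(b)` there.

Conversely, in a feasible `z`-bounded chamber one walks along circuits of `Wᗮ`, in the direction
increasing `⟨z, ·⟩`, until a new coordinate vanishes; this ends at a vertex `H_b`. The best vertex
of the chamber is then a `z`-maximum of the whole chamber, and a maximum at `H_b` forces the signs
of the chamber to be `μ(b)`. Injectivity holds because the strict maximum determines `H_b`, whose
zero set is `b`.
-/

namespace Hypertoric

open Function

variable {E : Type*} [Fintype E] {W : Submodule ℝ (E → ℝ)}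

theorem dot_eq_dotProduct (x y : E → ℝ) : dot x y = x ⬝ᵥ y := rfl

theorem dot_add_smul (z v d : E → ℝ) (t : ℝ) : dot z (v + t • d) = dot z v + t * dot z d := by
  simp only [dot_eq_dotProduct, dotProduct_add, dotProduct_smul, smul_eq_mul]

def perpSubmodule (W : Submodule ℝ (E → ℝ)) : Submodule ℝ (E → ℝ) where
  carrier := perp W
  add_mem' ha hb w hw := by
    change w ⬝ᵥ _ = 0
    rw [dotProduct_add, ← dot_eq_dotProduct, ← dot_eq_dotProduct, ha w hw, hb w hw, add_zero]
  zero_mem' w _ := dotProduct_zero w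
  smul_mem' c _ ha w hw := by
    change w ⬝ᵥ _ = 0
    rw [dotProduct_smul, ← dot_eq_dotProduct, ha w hw, smul_zero]

@[simp]
theorem mem_perpSubmodule {u : E → ℝ} :
    u ∈ perpSubmodule W ↔ u ∈ perp W :=
  Iff.rfl

theorem mem_of_forall_dotProduct_eq_zero {S : Submodule ℝ (E → ℝ)} {x : E → ℝ}
    (hx : ∀ γ : E → ℝ, (∀ s ∈ S, γ ⬝ᵥ s = 0) → γ ⬝ᵥ x = 0) : x ∈ S := by
  let S' : Submodule ℝ (EuclideanSpace ℝ E) := S.comap (WithLp.linearEquiv 2 ℝ (E → ℝ)).toLinearMap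
  suffices WithLp.toLp 2 x ∈ S'ᗮᗮ by simpa [S', Submodule.orthogonal_orthogonal] using this
  rw [Submodule.mem_orthogonal]
  intro γ hγ
  rw [Submodule.mem_orthogonal] at hγ
  have := hx γ.ofLp fun s hs => by
    simpa [S', EuclideanSpace.inner_eq_star_dotProduct, dotProduct_comm]
      using hγ (WithLp.toLp 2 s) hs
  simpa [EuclideanSpace.inner_eq_star_dotProduct, dotProduct_comm] using this

theorem mem_of_forall_mem_perp {γ : E → ℝ} (hγ : ∀ u ∈ perp W, γ ⬝ᵥ u = 0) : γ ∈ W :=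
  mem_of_forall_dotProduct_eq_zero fun δ hδ => by
    rw [dotProduct_comm]
    exact hγ δ fun w hw => by rw [dot_eq_dotProduct, dotProduct_comm]; exact hδ w hw

theorem sub_mem_perp {h v w : E → ℝ} (hv : v - h ∈ perp W) (hw : w - h ∈ perp W) :
    v - w ∈ perp W := by
  simpa using (perpSubmodule W).sub_mem hv hw

def IsGeneric (U : Set (E → ℝ)) (x : E → ℝ) : Prop :=
  ∀ γ, IsCircuit U γ → dot x γ ≠ 0

theorem exists_isCircuit_support_subset {U : Set (E → ℝ)} {u : E → ℝ} (hu : u ∈ U) (hne : u ≠ 0) :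
    ∃ χ, IsCircuit U χ ∧ support χ ⊆ support u := by
  obtain ⟨χ, ⟨hχU, hχ0, hχu⟩, hmin⟩ := (wellFounded_lt.onFun (f := support)).has_min
    {w | w ∈ U ∧ w ≠ 0 ∧ support w ⊆ support u} ⟨u, hu, hne, subset_rfl⟩
  refine ⟨χ, ⟨hχU, hχ0, fun w hw hw0 hwχ => ?_⟩, hχu⟩
  by_contra hne'
  exact hmin w ⟨hw, hw0, hwχ.trans hχu⟩ (hwχ.ssubset_of_ne hne')

def RestrictInjective (W : Submodule ℝ (E → ℝ)) (c : Set E) : Prop :=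
  ∀ u ∈ perp W, (∀ e ∈ c, u e = 0) → u = 0

def RestrictSurjective (W : Submodule ℝ (E → ℝ)) (c : Set E) : Prop :=
  ∀ y : E → ℝ, ∃ u ∈ perp W, ∀ e ∈ c, u e = y e

theorem RestrictInjective.eq_of_sub_mem {c : Set E} (hc : RestrictInjective W c) {v v' : E → ℝ}
    (hv : v - v' ∈ perp W) (hvc : ∀ e ∈ c, v e = v' e) : v = v' :=
  sub_eq_zero.1 <| hc _ hv fun e he => sub_eq_zero.2 (hvc e he)

theorem isBase_iff {b : Set E} :
    IsBase W b ↔ RestrictInjective W b ∧ RestrictSurjective W b := by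
  classical
  constructor
  · rintro ⟨hinj, hsurj⟩
    refine ⟨fun u hu hub => ?_, fun y => ?_⟩
    · exact congrArg Subtype.val
        (@hinj ⟨u, hu⟩ ⟨0, (perpSubmodule W).zero_mem⟩ (funext fun e => hub e.1 e.2))
    · obtain ⟨u, hu⟩ := hsurj fun e : b => y e
      exact ⟨u.1, u.2, fun e he => congrFun hu ⟨e, he⟩⟩
  · rintro ⟨hinj, hsurj⟩
    refine ⟨fun u₁ u₂ hu => ?_, fun y => ?_⟩
    · exact Subtype.ext <| hinj.eq_of_sub_mem ((perpSubmodule W).sub_mem u₁.2 u₂.2)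
        fun e he => congrFun hu ⟨e, he⟩
    · obtain ⟨u, hu, huy⟩ := hsurj fun e => if he : e ∈ b then y ⟨e, he⟩ else 0
      exact ⟨⟨u, hu⟩, funext fun e => by simpa [e.2] using huy e.1 e.2⟩

/-- `γ` is found by duality, from a vector outside `Wᗮ + {x | ∀ e ∈ c, x e = 0}`. -/
theorem exists_mem_ne_zero_support_subset {c : Set E} (hc : ¬ RestrictSurjective W c) :
    ∃ γ ∈ W, γ ≠ 0 ∧ support γ ⊆ c := by
  classical
  let S := perpSubmodule W ⊔ Submodule.pi c fun _ => ⊥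
  obtain ⟨y, hy⟩ : ∃ y, y ∉ S := by
    by_contra! hall
    refine hc fun y => ?_
    obtain ⟨u, hu, x, hx, rfl⟩ := Submodule.mem_sup.1 (hall y)
    exact ⟨u, hu, fun e he => by simp [(Submodule.mem_bot ℝ).1 (Submodule.mem_pi.1 hx e he)]⟩
  obtain ⟨γ, hγS, hγy⟩ : ∃ γ : E → ℝ, (∀ s ∈ S, γ ⬝ᵥ s = 0) ∧ γ ⬝ᵥ y ≠ 0 := by
    by_contra! hall
    exact hy (mem_of_forall_dotProduct_eq_zero hall)
  refine ⟨γ, mem_of_forall_mem_perp fun u hu => hγS u (Submodule.mem_sup_left hu),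
    fun h0 => hγy (by simp [h0]), fun e he => ?_⟩
  by_contra hec
  have hsingle : Pi.single e (1 : ℝ) ∈ S := Submodule.mem_sup_right <| Submodule.mem_pi.2
    fun f hf => by simp [show f ≠ e from fun hfe => hec (hfe ▸ hf)]
  exact he (by simpa using hγS _ hsingle)

theorem exists_isBase_subset {c : Set E} (hc : RestrictInjective W c) : ∃ b ⊆ c, IsBase W b := by
  obtain ⟨b, ⟨hbc, hb⟩, hmin⟩ := wellFounded_lt.has_min {b | b ⊆ c ∧ RestrictInjective W b}
    ⟨c, subset_rfl, hc⟩
  refine ⟨b, hbc, isBase_iff.2 ⟨hb, ?_⟩⟩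
  by_contra hsurj
  obtain ⟨γ, hγW, hγ0, hγb⟩ := exists_mem_ne_zero_support_subset hsurj
  obtain ⟨e, he⟩ := ne_iff.1 hγ0
  have heb : e ∈ b := hγb he
  -- `b \ {e}` is still injective: `γ ⊥ u` pins down `u e` once `u` vanishes on `b \ {e}`.
  refine hmin (b \ {e}) ⟨Set.sdiff_subset.trans hbc, fun u hu hub => hb u hu fun f hf => ?_⟩
    (Set.sdiff_singleton_ssubset.2 heb)
  have hγu : γ ⬝ᵥ u = γ e * u e := Finset.sum_eq_single e (fun f _ hfe => by
    by_cases hfb : f ∈ b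
    · rw [hub f ⟨hfb, hfe⟩, mul_zero]
    · rw [notMem_support.1 (fun h => hfb (hγb h)), zero_mul]) (by simp)
  by_cases hfe : f = e
  · subst hfe
    have := hu γ hγW
    rw [dot_eq_dotProduct, hγu] at this
    exact (mul_eq_zero.1 this).resolve_left he
  · exact hub f ⟨hf, hfe⟩

section Base

variable {b : Set E}

theorem exists_vertex (hb : IsBase W b) (h : E → ℝ) :
    ∃ v, v - h ∈ perp W ∧ ∀ e ∈ b, v e = 0 := by
  obtain ⟨u, hu, huh⟩ := (isBase_iff.1 hb).2 (-h)
  exact ⟨h + u, by simpa using hu, fun e he => by simp [huh e he]⟩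

theorem exists_fundamentalCocircuit (hb : IsBase W b) {e : E} (he : e ∈ b) :
    ∃ u ∈ perp W, u e = 1 ∧ ∀ f ∈ b, f ≠ e → u f = 0 := by
  classical
  obtain ⟨u, hu, huy⟩ := (isBase_iff.1 hb).2 (Pi.single e 1)
  exact ⟨u, hu, by simpa using huy e he, fun f hf hfe => by simpa [hfe] using huy f hf⟩

open Classical in
/-- The vertex `H_b` of a base `b` (`0` if `b` is not a base). -/
noncomputable def vertex (W : Submodule ℝ (E → ℝ)) (h : E → ℝ) (b : Set E) : E → ℝ :=
  if hb : IsBase W b then (exists_vertex hb h).choose else 0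

open Classical in
/-- The fundamental cocircuit of `e ∈ b`: the element of `Wᗮ` with coordinates `δ_{ef}` on `b`.
It is set to `0` for `e ∉ b`, so that every `u ∈ Wᗮ` is `∑ e, u e • fundamentalCocircuit W b e`. -/
noncomputable def fundamentalCocircuit (W : Submodule ℝ (E → ℝ)) (b : Set E) (e : E) : E → ℝ :=
  if hc : IsBase W b ∧ e ∈ b then (exists_fundamentalCocircuit hc.1 hc.2).choose else 0

theorem vertex_spec (hb : IsBase W b) (h : E → ℝ) :
    vertex W h b - h ∈ perp W ∧ ∀ e ∈ b, vertex W h b e = 0 := by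
  rw [vertex, dif_pos hb]
  exact (exists_vertex hb h).choose_spec

theorem eq_vertex (hb : IsBase W b) {h v : E → ℝ} (hv : v - h ∈ perp W)
    (hvb : ∀ e ∈ b, v e = 0) : v = vertex W h b := by
  obtain ⟨hvert, hvertb⟩ := vertex_spec hb h
  exact (isBase_iff.1 hb).1.eq_of_sub_mem (sub_mem_perp hv hvert)
    fun e he => by rw [hvb e he, hvertb e he]

theorem fundamentalCocircuit_spec (hb : IsBase W b) {e : E} (he : e ∈ b) :
    fundamentalCocircuit W b e ∈ perp W ∧ fundamentalCocircuit W b e e = 1 ∧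
      ∀ f ∈ b, f ≠ e → fundamentalCocircuit W b e f = 0 := by
  rw [fundamentalCocircuit, dif_pos ⟨hb, he⟩]
  exact (exists_fundamentalCocircuit hb he).choose_spec

theorem fundamentalCocircuit_of_notMem {e : E} (he : e ∉ b) : fundamentalCocircuit W b e = 0 := by
  rw [fundamentalCocircuit, dif_neg fun hc => he hc.2]

theorem eq_sum_fundamentalCocircuit (hb : IsBase W b) {u : E → ℝ} (hu : u ∈ perp W) :
    u = ∑ e, u e • fundamentalCocircuit W b e := by
  refine (isBase_iff.1 hb).1.eq_of_sub_mem ((perpSubmodule W).sub_mem hu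
    (Submodule.sum_mem _ fun e _ => (perpSubmodule W).smul_mem _ ?_)) fun f hf => ?_
  · by_cases he : e ∈ b
    · exact (fundamentalCocircuit_spec hb he).1
    · rw [fundamentalCocircuit_of_notMem he]; exact (perpSubmodule W).zero_mem
  · rw [Finset.sum_apply, Finset.sum_eq_single f (fun e _ hef => ?_) (by simp)]
    · simp [(fundamentalCocircuit_spec hb hf).2.1]
    by_cases he : e ∈ b
    · simp [(fundamentalCocircuit_spec hb he).2.2 f hf hef.symm]
    · simp [fundamentalCocircuit_of_notMem he]

theorem dot_eq_sum_fundamentalCocircuit (hb : IsBase W b) (z : E → ℝ) {u : E → ℝ}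
    (hu : u ∈ perp W) : dot z u = ∑ e, u e * dot z (fundamentalCocircuit W b e) := by
  conv_lhs => rw [eq_sum_fundamentalCocircuit hb hu]
  simp [dot_eq_dotProduct, dotProduct_sum, dotProduct_smul]

theorem isCircuit_fundamentalCocircuit (hb : IsBase W b) {e : E} (he : e ∈ b) :
    IsCircuit (perp W) (fundamentalCocircuit W b e) := by
  obtain ⟨hmem, hee, hzero⟩ := fundamentalCocircuit_spec hb he
  refine ⟨hmem, fun h0 => by simp [h0] at hee, fun w hw hw0 hsupp => ?_⟩
  have hweq : w = w e • fundamentalCocircuit W b e := by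
    refine (isBase_iff.1 hb).1.eq_of_sub_mem ((perpSubmodule W).sub_mem hw
      ((perpSubmodule W).smul_mem _ hmem)) fun f hf => ?_
    by_cases hfe : f = e
    · simp [hfe, hee]
    · have : w f = 0 := notMem_support.1 fun hwf => hsupp hwf (hzero f hf hfe)
      simp [this, hzero f hf hfe]
  have hwe : w e ≠ 0 := fun h0 => hw0 (by rw [hweq, h0, zero_smul])
  rw [hweq]
  exact support_const_smul_of_ne_zero _ _ hwe

/-- Otherwise `H_b` vanishes on `insert e b`, which contains the support of a circuit `χ` of `W`,
forcing `⟨h, χ⟩ = ⟨H_b, χ⟩ = 0`. -/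
theorem vertex_apply_ne_zero (hb : IsBase W b) {h : E → ℝ} (hh : IsGeneric W h) {e : E}
    (he : e ∉ b) : vertex W h b e ≠ 0 := by
  classical
  intro hve
  obtain ⟨hvert, hvertb⟩ := vertex_spec hb h
  have hnot : ¬ RestrictSurjective W (insert e b) := fun hsurj => by
    obtain ⟨u, hu, huy⟩ := hsurj (Pi.single e 1)
    have hu0 : u = 0 := (isBase_iff.1 hb).1 u hu fun f hf => by
      rw [huy f (.inr hf), Pi.single_eq_of_ne (ne_of_mem_of_not_mem hf he)]
    simpa [hu0] using huy e (.inl rfl)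
  obtain ⟨γ, hγW, hγ0, hγc⟩ := exists_mem_ne_zero_support_subset hnot
  obtain ⟨χ, hχ, hχγ⟩ := exists_isCircuit_support_subset (U := (W : Set (E → ℝ))) hγW hγ0
  have hvertχ : χ ⬝ᵥ vertex W h b = 0 := Finset.sum_eq_zero fun f _ => by
    by_cases hf : χ f = 0
    · simp [hf]
    · rcases hγc (hχγ hf) with rfl | hfb
      · simp [hve]
      · simp [hvertb f hfb]
  have := hvert χ hχ.1
  rw [dot_eq_dotProduct, dotProduct_sub, hvertχ] at this
  exact hh χ hχ (by rw [dot_eq_dotProduct, dotProduct_comm]; linarith)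

theorem eq_setOf_vertex_eq_zero (hb : IsBase W b) {h : E → ℝ} (hh : IsGeneric W h) :
    b = {e | vertex W h b e = 0} :=
  Set.ext fun e => ⟨(vertex_spec hb h).2 e, not_imp_not.1 (vertex_apply_ne_zero hb hh)⟩

end Base

/-- A sign with the convention `sgn 0 = 1`, so that it always produces a sign vector. -/
noncomputable def sgn (x : ℝ) : ℝ := if 0 ≤ x then 1 else -1

theorem sgn_eq_one_or_eq_neg_one (x : ℝ) : sgn x = 1 ∨ sgn x = -1 := by
  unfold sgn; split_ifs <;> simp

theorem sgn_mul_nonneg (x : ℝ) : 0 ≤ sgn x * x := by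
  unfold sgn; split_ifs <;> linarith

theorem sgn_mul_pos {x : ℝ} (hx : x ≠ 0) : 0 < sgn x * x := by
  unfold sgn
  split_ifs with h
  · simpa using h.lt_of_ne' hx
  · linarith

theorem eq_sgn_of_mul_nonneg {a x : ℝ} (ha : a = 1 ∨ a = -1) (h : 0 ≤ a * x) (hx : x ≠ 0) :
    a = sgn x := by
  unfold sgn
  rcases ha with rfl | rfl <;> split_ifs <;> grind

theorem eq_sgn_of_ne_neg_sgn {a x : ℝ} (ha : a = 1 ∨ a = -1) (h : a ≠ -sgn x) : a = sgn x := by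
  rcases ha with rfl | rfl <;> rcases sgn_eq_one_or_eq_neg_one x with hx | hx <;>
    simp_all

theorem mul_nonpos_of_neg_sgn_mul_nonneg {c x : ℝ} (h : 0 ≤ -sgn c * x) : x * c ≤ 0 := by
  unfold sgn at h
  split_ifs at h with hc <;> nlinarith

theorem exists_max_step {s r : E → ℝ} (hs : ∀ e, 0 ≤ s e) (hr : ∀ e, r e < 0 → 0 < s e)
    (hneg : ∃ e, r e < 0) :
    ∃ t : ℝ, 0 < t ∧ (∀ e, 0 ≤ s e + t * r e) ∧ ∃ f, r f < 0 ∧ s f + t * r f = 0 := by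
  classical
  let F := Finset.univ.filter fun e => r e < 0
  obtain ⟨f, hfF, hmin⟩ := F.exists_min_image (fun e => s e / -r e)
    (let ⟨e, he⟩ := hneg; ⟨e, by simp [F, he]⟩)
  have hf : r f < 0 := (Finset.mem_filter.1 hfF).2
  have ht : 0 < s f / -r f := div_pos (hr f hf) (neg_pos.2 hf)
  refine ⟨s f / -r f, ht, fun e => ?_, f, hf, by field_simp [hf.ne]; ring⟩
  by_cases he : r e < 0
  · have := (le_div_iff₀ (neg_pos.2 he)).1 (hmin e (by simp [F, he]))
    linarith
  · nlinarith [hs e]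

theorem exists_pos_step {s r : E → ℝ} (hs : ∀ e, 0 ≤ s e) (hr : ∀ e, r e < 0 → 0 < s e) :
    ∃ t : ℝ, 0 < t ∧ ∀ e, 0 ≤ s e + t * r e := by
  by_cases hneg : ∃ e, r e < 0
  · obtain ⟨t, ht, hstep, -⟩ := exists_max_step hs hr hneg
    exact ⟨t, ht, hstep⟩
  · push Not at hneg
    exact ⟨1, one_pos, fun e => by linarith [hs e, hneg e]⟩

section Chamber

variable {h α v d : E → ℝ}

theorem add_smul_mem_chamber {t : ℝ} (hv : v ∈ Chamber W h α) (hd : d ∈ perp W)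
    (ht : ∀ e, 0 ≤ α e * v e + t * (α e * d e)) : v + t • d ∈ Chamber W h α :=
  ⟨by simpa [add_sub_right_comm]
      using (perpSubmodule W).add_mem hv.1 ((perpSubmodule W).smul_mem t hd),
    fun e => by simpa [mul_add, mul_left_comm] using ht e⟩

theorem exists_pos_add_smul_mem_chamber (hv : v ∈ Chamber W h α) (hd : d ∈ perp W)
    (hvd : ∀ e, α e * d e < 0 → 0 < α e * v e) : ∃ t : ℝ, 0 < t ∧ v + t • d ∈ Chamber W h α :=
  let ⟨t, ht, hstep⟩ := exists_pos_step hv.2 hvd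
  ⟨t, ht, add_smul_mem_chamber hv hd hstep⟩

theorem exists_add_smul_mem_chamber_support_ssubset (hv : v ∈ Chamber W h α) (hd : d ∈ perp W)
    (hvd : ∀ e, α e * d e < 0 → 0 < α e * v e) (hneg : ∃ e, α e * d e < 0)
    (hzero : ∀ e, v e = 0 → d e = 0) :
    ∃ t : ℝ, 0 < t ∧ v + t • d ∈ Chamber W h α ∧ support (v + t • d) ⊂ support v := by
  obtain ⟨t, ht, hstep, f, hf, hft⟩ := exists_max_step hv.2 hvd hneg
  refine ⟨t, ht, add_smul_mem_chamber hv hd hstep, ?_⟩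
  have hsub : support (v + t • d) ⊆ support v :=
    support_subset_iff'.2 fun e he => by
      simp [notMem_support.1 he, hzero e (notMem_support.1 he)]
  refine (Set.ssubset_iff_of_subset hsub).2 ⟨f, (hvd f hf).ne' ∘ ?_, ?_⟩
  · intro hvf; simp [hvf]
  · have hαf : α f ≠ 0 := left_ne_zero_of_mul hf.ne
    simp only [mem_support, not_not, Pi.add_apply, Pi.smul_apply, smul_eq_mul]
    exact (mul_eq_zero.1 (by linarith : α f * (v f + t * d f) = 0)).resolve_left hαf

end Chamber

open Classical in
/-- The sign vector `μ(b)`: the signs of `H_b` off `b`; on `b`, the signs for which moving from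
`H_b` into the chamber along a fundamental cocircuit decreases `⟨z, ·⟩`. -/
noncomputable def signOfBase (W : Submodule ℝ (E → ℝ)) (h z : E → ℝ) (b : Set E) : E → ℝ :=
  fun e => if e ∈ b then -sgn (dot z (fundamentalCocircuit W b e)) else sgn (vertex W h b e)

section SignOfBase

variable {h z : E → ℝ} {b : Set E}

theorem signOfBase_eq_one_or_eq_neg_one (e : E) :
    signOfBase W h z b e = 1 ∨ signOfBase W h z b e = -1 := by
  unfold signOfBase
  split_ifs
  · rcases sgn_eq_one_or_eq_neg_one (dot z (fundamentalCocircuit W b e)) with h | h <;> simp [h]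
  · exact sgn_eq_one_or_eq_neg_one _

theorem vertex_mem_chamber_signOfBase (hb : IsBase W b) :
    vertex W h b ∈ Chamber W h (signOfBase W h z b) := by
  refine ⟨(vertex_spec hb h).1, fun e => ?_⟩
  unfold signOfBase
  split_ifs with he
  · simp [(vertex_spec hb h).2 e he]
  · exact sgn_mul_nonneg _

theorem dot_fundamentalCocircuit_ne_zero (hb : IsBase W b) (hz : IsGeneric (perp W) z) {e : E}
    (he : e ∈ b) : dot z (fundamentalCocircuit W b e) ≠ 0 :=
  hz _ (isCircuit_fundamentalCocircuit hb he)

/-- In the basis of fundamental cocircuits, `⟨z, ·⟩` has one coefficient per `e ∈ b`, and the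
signs `μ(b)` on `b` make every term nonpositive. -/
theorem dot_nonpos_of_signOfBase (hb : IsBase W b) (hz : IsGeneric (perp W) z) {u : E → ℝ}
    (hu : u ∈ perp W) (hsign : ∀ e ∈ b, 0 ≤ signOfBase W h z b e * u e) :
    dot z u ≤ 0 ∧ (dot z u = 0 → ∀ e ∈ b, u e = 0) := by
  have hterm : ∀ e ∈ Finset.univ, u e * dot z (fundamentalCocircuit W b e) ≤ 0 := fun e _ => by
    by_cases he : e ∈ b
    · have := hsign e he
      rw [signOfBase, if_pos he] at this
      exact mul_nonpos_of_neg_sgn_mul_nonneg this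
    · simp [fundamentalCocircuit_of_notMem he, dot_eq_dotProduct]
  rw [dot_eq_sum_fundamentalCocircuit hb z hu]
  refine ⟨Finset.sum_nonpos hterm, fun h0 e he => ?_⟩
  have := (Finset.sum_eq_zero_iff_of_nonpos hterm).1 h0 e (Finset.mem_univ e)
  exact (mul_eq_zero.1 this).resolve_right (dot_fundamentalCocircuit_ne_zero hb hz he)

theorem isBoundedSV_signOfBase (hb : IsBase W b) (hz : IsGeneric (perp W) z) :
    IsBoundedSV W z (signOfBase W h z b) := by
  refine ⟨0, ?_⟩
  rintro _ ⟨u, hu, rfl⟩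
  exact (dot_nonpos_of_signOfBase hb hz hu.1 fun e _ => hu.2 e).1

theorem dot_lt_dot_vertex (hb : IsBase W b) (hz : IsGeneric (perp W) z) {w : E → ℝ}
    (hw : w ∈ Chamber W h (signOfBase W h z b)) (hne : w ≠ vertex W h b) :
    dot z w < dot z (vertex W h b) := by
  obtain ⟨hvert, hvertb⟩ := vertex_spec hb h
  have hsign : ∀ e ∈ b, 0 ≤ signOfBase W h z b e * (w - vertex W h b) e := fun e he => by
    simpa [hvertb e he] using hw.2 e
  obtain ⟨hle, hzero⟩ := dot_nonpos_of_signOfBase hb hz (sub_mem_perp hw.1 hvert) hsign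
  have hlt : dot z (w - vertex W h b) < 0 := hle.lt_of_ne fun h0 => hne <|
    eq_vertex hb hw.1 fun e he => by simpa [hvertb e he] using hzero h0 e he
  simpa [dot_eq_dotProduct, dotProduct_sub] using hlt

theorem dot_le_dot_vertex (hb : IsBase W b) (hz : IsGeneric (perp W) z) {w : E → ℝ}
    (hw : w ∈ Chamber W h (signOfBase W h z b)) : dot z w ≤ dot z (vertex W h b) := by
  rcases eq_or_ne w (vertex W h b) with rfl | hne
  · exact le_rfl
  · exact (dot_lt_dot_vertex hb hz hw hne).le

theorem eq_signOfBase (hb : IsBase W b) (hh : IsGeneric W h) (hz : IsGeneric (perp W) z)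
    {α : E → ℝ} (hα : ∀ e, α e = 1 ∨ α e = -1) (hmem : vertex W h b ∈ Chamber W h α)
    (hmax : ∀ w ∈ Chamber W h α, dot z w ≤ dot z (vertex W h b)) :
    α = signOfBase W h z b := by
  funext e
  unfold signOfBase
  split_ifs with he
  · by_contra hne
    -- otherwise moving along `α e • u_e` stays in the chamber and increases `⟨z, ·⟩`
    obtain ⟨hu, hue, hub⟩ := fundamentalCocircuit_spec hb he
    set d := α e • fundamentalCocircuit W b e
    have hdz : 0 < dot z d := by
      rw [show d = α e • fundamentalCocircuit W b e from rfl, dot_eq_dotProduct, dotProduct_smul,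
        smul_eq_mul, eq_sgn_of_ne_neg_sgn (hα e) hne]
      exact sgn_mul_pos (dot_fundamentalCocircuit_ne_zero hb hz he)
    have hvd : ∀ f, α f * d f < 0 → 0 < α f * vertex W h b f := fun f hf => by
      by_cases hfb : f ∈ b
      · by_cases hfe : f = e
        · subst hfe
          simp [d, hue] at hf
          nlinarith [mul_self_nonneg (α f)]
        · simp [d, hub f hfb hfe] at hf
      · exact (hmem.2 f).lt_of_ne (mul_ne_zero (left_ne_zero_of_mul hf.ne)
          (vertex_apply_ne_zero hb hh hfb)).symm
    obtain ⟨t, ht, hstep⟩ :=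
      exists_pos_add_smul_mem_chamber hmem ((perpSubmodule W).smul_mem _ hu) hvd
    have := hmax _ hstep
    rw [dot_add_smul] at this
    nlinarith
  · exact eq_sgn_of_mul_nonneg (hα e) (hmem.2 e) (vertex_apply_ne_zero hb hh he)

theorem signOfBase_isBoundedFeasible (hb : IsBase W b) (hz : IsGeneric (perp W) z) :
    (∀ e, signOfBase W h z b e = 1 ∨ signOfBase W h z b e = -1) ∧
      IsFeasible W h (signOfBase W h z b) ∧ IsBoundedSV W z (signOfBase W h z b) :=
  ⟨signOfBase_eq_one_or_eq_neg_one, ⟨_, vertex_mem_chamber_signOfBase hb⟩,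
    isBoundedSV_signOfBase hb hz⟩

theorem injOn_signOfBase (hh : IsGeneric W h) (hz : IsGeneric (perp W) z) :
    Set.InjOn (signOfBase W h z) {b | IsBase W b} := by
  intro b hb b' hb' heq
  -- both vertices maximize `⟨z, ·⟩` on the common chamber, and the maximum is strict
  have hmem : vertex W h b' ∈ Chamber W h (signOfBase W h z b) :=
    heq ▸ vertex_mem_chamber_signOfBase hb'
  have hle : dot z (vertex W h b) ≤ dot z (vertex W h b') :=
    dot_le_dot_vertex hb' hz (heq ▸ vertex_mem_chamber_signOfBase hb)
  have hveq : vertex W h b' = vertex W h b :=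
    by_contra fun hne => (dot_lt_dot_vertex hb hz hmem hne).not_ge hle
  rw [eq_setOf_vertex_eq_zero hb hh, eq_setOf_vertex_eq_zero hb' hh, hveq]

end SignOfBase

section BoundedChamber

variable {h z α : E → ℝ}

theorem dot_nonpos_of_mem_cone (hbd : IsBoundedSV W z α) {u : E → ℝ} (hu : u ∈ cone W α) :
    dot z u ≤ 0 := by
  obtain ⟨M, hM⟩ := hbd
  by_contra! hpos
  obtain ⟨t, ht, hM'⟩ : ∃ t : ℝ, 0 ≤ t ∧ M < t * dot z u :=
    ⟨(|M| + 1) / dot z u, by positivity, by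
      rw [div_mul_cancel₀ _ hpos.ne']; linarith [le_abs_self M]⟩
  have htu : t • u ∈ cone W α :=
    ⟨(perpSubmodule W).smul_mem t hu.1, fun e => by
      simpa [mul_left_comm] using mul_nonneg ht (hu.2 e)⟩
  exact (hM ⟨t • u, htu, rfl⟩).not_gt (by simpa [dot_eq_dotProduct, dotProduct_smul] using hM')

/-- At a chamber point whose zero set does not determine a point of `h + Wᗮ`, a circuit of `Wᗮ`
inside the remaining freedom gives a direction increasing `⟨z, ·⟩`; boundedness makes it leave the
chamber, and moving until it does kills a new coordinate. -/
theorem exists_mem_chamber_dot_le_support_ssubset (hz : IsGeneric (perp W) z)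
    (hbd : IsBoundedSV W z α) {v : E → ℝ} (hv : v ∈ Chamber W h α)
    (hnot : ¬ RestrictInjective W {e | v e = 0}) :
    ∃ v' ∈ Chamber W h α, dot z v ≤ dot z v' ∧ support v' ⊂ support v := by
  obtain ⟨u, hu, hu0, hne⟩ : ∃ u ∈ perp W, (∀ e, v e = 0 → u e = 0) ∧ u ≠ 0 := by
    simpa [RestrictInjective] using hnot
  obtain ⟨χ, hχ, hχu⟩ := exists_isCircuit_support_subset hu hne
  set d := sgn (dot z χ) • χ
  have hd : d ∈ perp W := (perpSubmodule W).smul_mem _ hχ.1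
  have hdz : 0 < dot z d := by
    simpa [d, dot_eq_dotProduct, dotProduct_smul] using sgn_mul_pos (hz χ hχ)
  have hneg : ∃ e, α e * d e < 0 := by
    by_contra! hall
    exact (dot_nonpos_of_mem_cone hbd ⟨hd, hall⟩).not_gt hdz
  have hzero : ∀ e, v e = 0 → d e = 0 := fun e he => by
    simp [d, notMem_support.1 fun hχe => hχu hχe (hu0 e he)]
  have hvd : ∀ e, α e * d e < 0 → 0 < α e * v e := fun e he =>
    (hv.2 e).lt_of_ne (mul_ne_zero (left_ne_zero_of_mul he.ne)
      fun hve => he.ne (by simp [hzero e hve])).symm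
  obtain ⟨t, ht, hmem, hss⟩ := exists_add_smul_mem_chamber_support_ssubset hv hd hvd hneg hzero
  exact ⟨_, hmem, by rw [dot_add_smul]; nlinarith, hss⟩

theorem exists_vertex_mem_chamber_dot_le (hz : IsGeneric (perp W) z) (hbd : IsBoundedSV W z α)
    {v : E → ℝ} (hv : v ∈ Chamber W h α) :
    ∃ b, IsBase W b ∧ vertex W h b ∈ Chamber W h α ∧ dot z v ≤ dot z (vertex W h b) := by
  obtain ⟨v', ⟨hv', hle⟩, hmin⟩ := (wellFounded_lt.onFun (f := support)).has_min
    {v' | v' ∈ Chamber W h α ∧ dot z v ≤ dot z v'} ⟨v, hv, le_rfl⟩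
  have hinj : RestrictInjective W {e | v' e = 0} := by
    by_contra hnot
    obtain ⟨v'', hv'', hle', hss⟩ := exists_mem_chamber_dot_le_support_ssubset hz hbd hv' hnot
    exact hmin v'' ⟨hv'', hle.trans hle'⟩ hss
  obtain ⟨b, hbc, hb⟩ := exists_isBase_subset hinj
  obtain rfl := eq_vertex hb hv'.1 fun e he => hbc he
  exact ⟨b, hb, hv', hle⟩

theorem exists_isBase_signOfBase_eq (hh : IsGeneric W h) (hz : IsGeneric (perp W) z)
    (hα : ∀ e, α e = 1 ∨ α e = -1) (hfeas : IsFeasible W h α) (hbd : IsBoundedSV W z α) :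
    ∃ b, IsBase W b ∧ signOfBase W h z b = α := by
  obtain ⟨v, hv⟩ := hfeas
  obtain ⟨b₀, hb₀, hb₀mem, -⟩ := exists_vertex_mem_chamber_dot_le hz hbd hv
  -- the best vertex of the chamber is a `z`-maximum of the whole chamber
  obtain ⟨b, ⟨hb, hbmem⟩, hbmax⟩ := Set.exists_max_image
    {b | IsBase W b ∧ vertex W h b ∈ Chamber W h α} (fun b => dot z (vertex W h b))
    (Set.toFinite _) ⟨b₀, hb₀, hb₀mem⟩
  refine ⟨b, hb, (eq_signOfBase hb hh hz hα hbmem fun w hw => ?_).symm⟩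
  obtain ⟨b', hb', hb'mem, hle⟩ := exists_vertex_mem_chamber_dot_le hz hbd hw
  exact hle.trans (hbmax b' ⟨hb', hb'mem⟩)

end BoundedChamber

end Hypertoric

open Hypertoric

/-- Bases are in bijection with bounded feasible chambers: for generic `h` and
`z`, each base `b` determines a unique bounded feasible sign vector `μ b` whose
chamber has `ζ`-maximum at the vertex `H_b`, and `b ↦ μ b` is a bijection from
bases onto bounded feasible sign vectors. -/
theorem bases_biject_with_bounded_feasible_chambers {E : Type*} [Fintype E]
    (W : Submodule ℝ (E → ℝ)) (h z : E → ℝ)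
    (hh : ∀ γ : E → ℝ, IsCircuit (W : Set (E → ℝ)) γ → dot h γ ≠ 0)
    (hz : ∀ χ : E → ℝ, IsCircuit (perp W) χ → dot z χ ≠ 0) :
    ∃ μ : Set E → (E → ℝ),
      (∀ b : Set E, IsBase W b →
        ((∀ e, μ b e = 1 ∨ μ b e = -1) ∧
          IsFeasible W h (μ b) ∧ IsBoundedSV W z (μ b) ∧
          (∀ v : E → ℝ, v - h ∈ perp W → (∀ e ∈ b, v e = 0) →
            v ∈ Chamber W h (μ b) ∧ ∀ w ∈ Chamber W h (μ b), dot z w ≤ dot z v)) ∧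
        (∀ α : E → ℝ, (∀ e, α e = 1 ∨ α e = -1) →
          IsFeasible W h α → IsBoundedSV W z α →
          (∀ v : E → ℝ, v - h ∈ perp W → (∀ e ∈ b, v e = 0) →
            v ∈ Chamber W h α ∧ ∀ w ∈ Chamber W h α, dot z w ≤ dot z v) →
          α = μ b)) ∧
      Set.BijOn μ {b : Set E | IsBase W b}
        {α : E → ℝ | (∀ e, α e = 1 ∨ α e = -1) ∧
          IsFeasible W h α ∧ IsBoundedSV W z α} := by
  refine ⟨signOfBase W h z, fun b hb => ⟨?_, fun α hα _ _ hmax => ?_⟩,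
    fun b hb => signOfBase_isBoundedFeasible hb hz, injOn_signOfBase hh hz,
    fun α ⟨hα, hfeas, hbd⟩ => exists_isBase_signOfBase_eq hh hz hα hfeas hbd⟩
  · obtain ⟨hsign, hfeas, hbd⟩ := signOfBase_isBoundedFeasible hb hz
    refine ⟨hsign, hfeas, hbd, fun v hv hvb => ?_⟩
    obtain rfl := eq_vertex hb hv hvb
    exact ⟨vertex_mem_chamber_signOfBase hb, fun w hw => dot_le_dot_vertex hb hz hw⟩
  · obtain ⟨hmem, hmax⟩ := hmax _ (vertex_spec hb h).1 (vertex_spec hb h).2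
    exact eq_signOfBase hb hh hz hα hmem hmax
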